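/- In Case (1b) (where m̄_i·s_i ≥ m̄_{i-1}·s_{i-1} but (m̄_i+1)·s_i < (m̄_{i-1}+1)·s_{i-1}), if both functions switch on their extra machine simultaneously, then the maximum queue of F_i equals T·max{ ρ_{i-1}·(s_{i-1}(1−ρ_{i-1}) − s_i(1−ρ_i)), (1−ρ_{i-1})·(s_{i-1}ρ_{i-1} − s_iρ_i) } and the queue is empty at the switch-on instant. -/

import Mathlib

open Classical in
/-- Service rate of a function running `m̄` machines always and one extra machine of
speed `s` on during a periodically repeated window `[φ + kT, φ + kT + ρT)`. -/
noncomputable def onRate14 (T φ mbar ρ s t : ℝ) : ℝ :=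
  if ∃ k : ℤ, φ + k * T ≤ t ∧ t < φ + k * T + ρ * T then (mbar + 1) * s else mbar * s

/-- Fluid queue trajectory of `F_i`: initial content `q0` plus the integral of
(input rate from `F_{i-1}`) minus (service rate of `F_i`). -/
noncomputable def qTraj14 (T φ0 m0 ρ0 s0 φ1 m1 ρ1 s1 q0 t : ℝ) : ℝ :=
  q0 + ∫ x in (0 : ℝ)..t, (onRate14 T φ0 m0 ρ0 s0 x - onRate14 T φ1 m1 ρ1 s1 x)

/-!
Both functions serve at the same average rate `r = (m̄ + ρ) s`, so the net inflow into `F_i`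
integrates to zero over a period and the queue, started empty at the common switch-on instant
`φ0`, is `T`-periodic. Within a period the net inflow rate is positive while the extra machine of
`F_{i-1}` runs (it is at least `(m̄_{i-1}+1)s_{i-1} - (m̄_i+1)s_i > 0`) and nonpositive afterwards
(at most `m̄_{i-1}s_{i-1} - m̄_i s_i ≤ 0`). So the queue peaks at the switch-off instant
`φ0 + ρ_{i-1}T`; the two terms of the maximum are its value there when `ρ_{i-1} ≤ ρ_i`,
resp. `ρ_i ≤ ρ_{i-1}`.
-/

open MeasureTheory Set Function intervalIntegral

theorem Function.Periodic.image_Ici {α β : Type*} [AddCommGroup α] [LinearOrder α]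
    [IsOrderedAddMonoid α] [Archimedean α] {f : α → β} {c : α} (hf : Periodic f c) (hc : 0 < c)
    (a : α) : f '' Ici a = range f :=
  (image_subset_range f _).antisymm <|
    hf.image_Icc hc a ▸ image_mono Icc_subset_Ici_self

/-- The work `∫ x in φ..φ + u, onRate14 T φ m ρ s x` done in the first `u` time units of a period
(`integral_onRate14`); only meaningful for `u ∈ [0, T]`. -/
noncomputable def cumulativeService (T m ρ s u : ℝ) : ℝ :=
  m * s * u + s * min u (ρ * T)

theorem cumulativeService_self {T m ρ s : ℝ} (hT : 0 ≤ T) (hρ : ρ ≤ 1) :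
    cumulativeService T m ρ s T = (m + ρ) * s * T := by
  rw [cumulativeService, min_eq_right (mul_le_of_le_one_left hT hρ)]
  ring

section onRate14

variable {T φ m ρ s : ℝ}

theorem measurable_onRate14 : Measurable (onRate14 T φ m ρ s) := by
  have hwindows : {t : ℝ | ∃ k : ℤ, φ + k * T ≤ t ∧ t < φ + k * T + ρ * T}
      = ⋃ k : ℤ, Ico (φ + k * T) (φ + k * T + ρ * T) := by
    ext t; simp
  refine Measurable.ite ?_ measurable_const measurable_const
  rw [hwindows]
  exact .iUnion fun _ => measurableSet_Ico

theorem intervalIntegrable_onRate14 (a b : ℝ) :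
    IntervalIntegrable (onRate14 T φ m ρ s) volume a b := by
  refine IntervalIntegrable.mono_fun' (g := fun _ => |m * s| + |(m + 1) * s|)
    intervalIntegrable_const measurable_onRate14.aestronglyMeasurable (ae_of_all _ fun t => ?_)
  simp only [onRate14]
  split <;> simp only [Real.norm_eq_abs] <;> linarith [abs_nonneg (m * s), abs_nonneg ((m + 1) * s)]

theorem periodic_onRate14 : Periodic (onRate14 T φ m ρ s) T := fun t => by
  simp only [onRate14]
  congr 1
  exact propext ⟨fun ⟨k, h⟩ => ⟨k - 1, by push_cast; constructor <;> linarith [h.1, h.2]⟩,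
    fun ⟨k, h⟩ => ⟨k + 1, by push_cast; constructor <;> linarith [h.1, h.2]⟩⟩

theorem onRate14_add_of_mem_Ico (hT : 0 < T) (hρ : ρ ≤ 1) {u : ℝ} (hu : u ∈ Ico 0 T) :
    onRate14 T φ m ρ s (φ + u) = if u < ρ * T then (m + 1) * s else m * s := by
  obtain ⟨hu0, huT⟩ := hu
  unfold onRate14
  congr 1
  apply propext
  constructor
  · rintro ⟨k, hk_le, hk_lt⟩
    have hk_lt_one : (k : ℝ) < 1 := by nlinarith
    have hk_gt : (-1 : ℝ) < k := by nlinarith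
    obtain rfl : k = 0 := by
      have : k < 1 := by exact_mod_cast hk_lt_one
      have : -1 < k := by exact_mod_cast hk_gt
      omega
    simp only [Int.cast_zero, zero_mul, add_zero] at hk_lt
    linarith
  · intro h
    exact ⟨0, by simpa using hu0, by simpa using h⟩

theorem integral_onRate14 (hT : 0 < T) (hρ : ρ ∈ Icc 0 1) {u : ℝ} (hu : u ∈ Icc 0 T) :
    ∫ x in φ..φ + u, onRate14 T φ m ρ s x = cumulativeService T m ρ s u := by
  obtain ⟨hu0, huT⟩ := hu
  set v := min u (ρ * T)
  have hv0 : 0 ≤ v := le_min hu0 (mul_nonneg hρ.1 hT.le)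
  have hvu : v ≤ u := min_le_left _ _
  have h_rate_of_mem {x : ℝ} (hx : x ∈ Ioo φ (φ + u)) :
      onRate14 T φ m ρ s x = if x - φ < ρ * T then (m + 1) * s else m * s := by
    rw [← onRate14_add_of_mem_Ico hT hρ.2 ⟨by linarith [hx.1], by linarith [hx.2]⟩,
      add_sub_cancel]
  have h_on : EqOn (onRate14 T φ m ρ s) (fun _ => (m + 1) * s) (Ioo φ (φ + v)) := fun x hx => by
    rw [h_rate_of_mem ⟨hx.1, hx.2.trans_le (by linarith)⟩,
      if_pos ((sub_lt_iff_lt_add' .. |>.2 hx.2).trans_le (min_le_right _ _))]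
  have h_off : EqOn (onRate14 T φ m ρ s) (fun _ => m * s) (Ioo (φ + v) (φ + u)) := fun x hx => by
    rw [h_rate_of_mem ⟨by linarith [hx.1], hx.2⟩, if_neg fun h =>
      (lt_min (by linarith [hx.2]) h).not_ge (by linarith [hx.1] : v ≤ x - φ)]
  rw [← integral_add_adjacent_intervals (b := φ + v) (intervalIntegrable_onRate14 _ _)
      (intervalIntegrable_onRate14 _ _), integral_congr_Ioo_of_le (by linarith) h_on,
    integral_congr_Ioo_of_le (by linarith) h_off, intervalIntegral.integral_const,
    intervalIntegral.integral_const, smul_eq_mul, smul_eq_mul, cumulativeService]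
  ring

theorem integral_onRate14_period (hT : 0 < T) (hρ : ρ ∈ Icc 0 1) (t : ℝ) :
    ∫ x in t..t + T, onRate14 T φ m ρ s x = (m + ρ) * s * T := by
  rw [periodic_onRate14.intervalIntegral_add_eq t φ, integral_onRate14 hT hρ ⟨hT.le, le_rfl⟩,
    cumulativeService_self hT.le hρ.2]

end onRate14

section Case1b

variable {T m0 ρ0 s0 m1 ρ1 s1 : ℝ}

theorem cumulativeService_sub_mem_Icc (hT : 0 ≤ T) (hρ0 : ρ0 ≤ 1) (hρ1 : ρ1 ≤ 1) (hs1 : 0 ≤ s1)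
    (hrate : (m0 + ρ0) * s0 = (m1 + ρ1) * s1) (hcase1 : m0 * s0 ≤ m1 * s1)
    (hcase2 : (m1 + 1) * s1 < (m0 + 1) * s0) {u : ℝ} (hu : u ∈ Icc 0 T) :
    cumulativeService T m0 ρ0 s0 u - cumulativeService T m1 ρ1 s1 u ∈
      Icc 0 (cumulativeService T m0 ρ0 s0 (ρ0 * T) - cumulativeService T m1 ρ1 s1 (ρ0 * T)) := by
  obtain ⟨hu0, huT⟩ := hu
  have hperiod : cumulativeService T m0 ρ0 s0 T - cumulativeService T m1 ρ1 s1 T = 0 := by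
    rw [cumulativeService_self hT hρ0, cumulativeService_self hT hρ1, hrate, sub_self]
  simp only [cumulativeService] at hperiod ⊢
  rcases le_total u (ρ0 * T) with hu | hu
  · have hmin : min (ρ0 * T) (ρ1 * T) - min u (ρ1 * T) ≤ ρ0 * T - u := by
      rcases le_total u (ρ1 * T) with h | h
      · rw [min_eq_left h]; linarith [min_le_left (ρ0 * T) (ρ1 * T)]
      · rw [min_eq_right h, min_eq_right (h.trans hu)]; linarith
    rw [min_eq_left hu, min_self]
    constructor
    · nlinarith [mul_le_mul_of_nonneg_left (min_le_left u (ρ1 * T)) hs1]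
    · nlinarith [mul_le_mul_of_nonneg_left hmin hs1]
  · rw [min_eq_right hu, min_self]
    rw [min_eq_right (mul_le_of_le_one_left hT hρ0), min_eq_right (mul_le_of_le_one_left hT hρ1)]
      at hperiod
    constructor
    · nlinarith [mul_le_mul_of_nonneg_left (min_le_right u (ρ1 * T)) hs1]
    · nlinarith [mul_le_mul_of_nonneg_left (min_le_min_right (ρ1 * T) hu) hs1]

theorem cumulativeService_sub_at_switchOff (hT : 0 ≤ T) (hs1 : 0 ≤ s1)
    (hrate : (m0 + ρ0) * s0 = (m1 + ρ1) * s1) :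
    cumulativeService T m0 ρ0 s0 (ρ0 * T) - cumulativeService T m1 ρ1 s1 (ρ0 * T) =
      T * max (ρ0 * (s0 * (1 - ρ0) - s1 * (1 - ρ1))) ((1 - ρ0) * (s0 * ρ0 - s1 * ρ1)) := by
  simp only [cumulativeService, min_self]
  rcases le_total ρ0 ρ1 with h | h
  · rw [min_eq_left (mul_le_mul_of_nonneg_right h hT), max_eq_left (by nlinarith)]
    linear_combination ρ0 * T * hrate
  · rw [min_eq_right (mul_le_mul_of_nonneg_right h hT), max_eq_right (by nlinarith)]
    linear_combination ρ0 * T * hrate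

end Case1b

section qTraj14

variable {T φ0 m0 ρ0 s0 φ1 m1 ρ1 s1 q0 : ℝ}

theorem qTraj14_sub (t t' : ℝ) :
    qTraj14 T φ0 m0 ρ0 s0 φ1 m1 ρ1 s1 q0 t - qTraj14 T φ0 m0 ρ0 s0 φ1 m1 ρ1 s1 q0 t' =
      ∫ x in t'..t, (onRate14 T φ0 m0 ρ0 s0 x - onRate14 T φ1 m1 ρ1 s1 x) := by
  rw [qTraj14, qTraj14, add_sub_add_left_eq_sub, integral_interval_sub_left
    ((intervalIntegrable_onRate14 0 t).sub (intervalIntegrable_onRate14 0 t))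
    ((intervalIntegrable_onRate14 0 t').sub (intervalIntegrable_onRate14 0 t'))]

theorem qTraj14_eq_cumulativeService_sub (hT : 0 < T) (hρ0 : ρ0 ∈ Icc 0 1)
    (hρ1 : ρ1 ∈ Icc 0 1) {u : ℝ} (hu : u ∈ Icc 0 T) :
    qTraj14 T φ0 m0 ρ0 s0 φ0 m1 ρ1 s1 q0 (φ0 + u) =
      qTraj14 T φ0 m0 ρ0 s0 φ0 m1 ρ1 s1 q0 φ0 +
        (cumulativeService T m0 ρ0 s0 u - cumulativeService T m1 ρ1 s1 u) := by
  rw [← sub_eq_iff_eq_add', qTraj14_sub, integral_sub (intervalIntegrable_onRate14 _ _)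
    (intervalIntegrable_onRate14 _ _), integral_onRate14 hT hρ0 hu,
    integral_onRate14 hT hρ1 hu]

theorem qTraj14_periodic (hT : 0 < T) (hρ0 : ρ0 ∈ Icc 0 1) (hρ1 : ρ1 ∈ Icc 0 1)
    (hrate : (m0 + ρ0) * s0 = (m1 + ρ1) * s1) :
    Periodic (qTraj14 T φ0 m0 ρ0 s0 φ1 m1 ρ1 s1 q0) T := fun t => by
  rw [← sub_eq_zero, qTraj14_sub, integral_sub (intervalIntegrable_onRate14 _ _)
    (intervalIntegrable_onRate14 _ _), integral_onRate14_period hT hρ0,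
    integral_onRate14_period hT hρ1, hrate, sub_self]

end qTraj14

theorem stmt14_general (r s0 s1 T φ0 m0 m1 ρ0 ρ1 : ℝ)
    (hs0 : 0 < s0) (hs1 : 0 < s1) (hT : 0 < T)
    (hm0 : m0 = (⌊r / s0⌋ : ℤ)) (hρ0 : ρ0 = r / s0 - m0)
    (hm1 : m1 = (⌊r / s1⌋ : ℤ)) (hρ1 : ρ1 = r / s1 - m1)
    (hcase1 : m0 * s0 ≤ m1 * s1) (hcase2 : (m1 + 1) * s1 < (m0 + 1) * s0) :
    ∃ q0 : ℝ,
      (∀ t ∈ Set.Ici (0 : ℝ), 0 ≤ qTraj14 T φ0 m0 ρ0 s0 φ0 m1 ρ1 s1 q0 t) ∧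
      IsLUB ((fun t => qTraj14 T φ0 m0 ρ0 s0 φ0 m1 ρ1 s1 q0 t) '' Set.Ici (0 : ℝ))
        (T * max (ρ0 * (s0 * (1 - ρ0) - s1 * (1 - ρ1)))
                 ((1 - ρ0) * (s0 * ρ0 - s1 * ρ1))) ∧
      qTraj14 T φ0 m0 ρ0 s0 φ0 m1 ρ1 s1 q0 φ0 = 0 := by
  have hρ0_mem : ρ0 ∈ Icc 0 1 := by
    rw [hρ0, hm0]; exact ⟨Int.fract_nonneg _, (Int.fract_lt_one _).le⟩
  have hρ1_mem : ρ1 ∈ Icc 0 1 := by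
    rw [hρ1, hm1]; exact ⟨Int.fract_nonneg _, (Int.fract_lt_one _).le⟩
  have hrate : (m0 + ρ0) * s0 = (m1 + ρ1) * s1 := by
    rw [hρ0, hρ1, add_sub_cancel, add_sub_cancel, div_mul_cancel₀ r hs0.ne',
      div_mul_cancel₀ r hs1.ne']
  set G := fun u => cumulativeService T m0 ρ0 s0 u - cumulativeService T m1 ρ1 s1 u
  set Q := qTraj14 T φ0 m0 ρ0 s0 φ0 m1 ρ1 s1
    (-∫ x in 0..φ0, (onRate14 T φ0 m0 ρ0 s0 x - onRate14 T φ0 m1 ρ1 s1 x))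
  have hQφ0 : Q φ0 = 0 := neg_add_cancel _
  have hQ_period : Periodic Q T := qTraj14_periodic hT hρ0_mem hρ1_mem hrate
  have hG_mem {u : ℝ} (hu : u ∈ Icc 0 T) : G u ∈ Icc 0 (G (ρ0 * T)) :=
    cumulativeService_sub_mem_Icc hT.le hρ0_mem.2 hρ1_mem.2 hs1.le hrate hcase1 hcase2 hu
  have hQ_shift {u : ℝ} (hu : u ∈ Icc 0 T) : Q (φ0 + u) = Q φ0 + G u :=
    qTraj14_eq_cumulativeService_sub hT hρ0_mem hρ1_mem hu
  have hQ_image : Q '' Ici 0 = G '' Icc 0 T :=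
    calc Q '' Ici 0 = Q '' ((φ0 + ·) '' Icc 0 T) := by
          rw [hQ_period.image_Ici hT, image_const_add_Icc, add_zero, hQ_period.image_Icc hT]
      _ = G '' Icc 0 T := by
          rw [image_image]
          exact image_congr fun u hu => by rw [hQ_shift hu, hQφ0, zero_add]
  refine ⟨_, fun t ht => ?_, ?_, hQφ0⟩
  · obtain ⟨u, hu, hQt⟩ := hQ_image ▸ mem_image_of_mem Q ht
    show 0 ≤ Q t
    exact hQt ▸ (hG_mem hu).1
  · show IsLUB (Q '' Ici 0) _
    rw [hQ_image, ← cumulativeService_sub_at_switchOff hT.le hs1.le hrate]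
    exact IsGreatest.isLUB ⟨mem_image_of_mem G ⟨mul_nonneg hρ0_mem.1 hT.le,
      mul_le_of_le_one_left hT.le hρ0_mem.2⟩, forall_mem_image.2 fun u hu => (hG_mem hu).2⟩

/-- Case (1b) (`m̄_i s_i ≥ m̄_{i-1} s_{i-1}` but `(m̄_i+1)s_i < (m̄_{i-1}+1)s_{i-1}`):
if both functions switch on their extra machine simultaneously (same offset `φ0`),
the queue stays nonnegative, its maximum equals
`T·max{ρ_{i-1}(s_{i-1}(1−ρ_{i-1}) − s_i(1−ρ_i)), (1−ρ_{i-1})(s_{i-1}ρ_{i-1} − s_iρ_i)}`,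
and the queue is empty at the switch-on instant `φ0`. -/
theorem stmt14 (r s0 s1 T φ0 m0 m1 ρ0 ρ1 : ℝ)
    (hr : 0 < r) (hs0 : 0 < s0) (hs1 : 0 < s1) (hT : 0 < T) (hφ0 : 0 ≤ φ0)
    (hm0 : m0 = (⌊r / s0⌋ : ℤ)) (hρ0 : ρ0 = r / s0 - m0)
    (hm1 : m1 = (⌊r / s1⌋ : ℤ)) (hρ1 : ρ1 = r / s1 - m1)
    (hcase1 : m0 * s0 ≤ m1 * s1) (hcase2 : (m1 + 1) * s1 < (m0 + 1) * s0) :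
    ∃ q0 : ℝ,
      (∀ t ∈ Set.Ici (0 : ℝ), 0 ≤ qTraj14 T φ0 m0 ρ0 s0 φ0 m1 ρ1 s1 q0 t) ∧
      IsLUB ((fun t => qTraj14 T φ0 m0 ρ0 s0 φ0 m1 ρ1 s1 q0 t) '' Set.Ici (0 : ℝ))
        (T * max (ρ0 * (s0 * (1 - ρ0) - s1 * (1 - ρ1)))
                 ((1 - ρ0) * (s0 * ρ0 - s1 * ρ1))) ∧
      qTraj14 T φ0 m0 ρ0 s0 φ0 m1 ρ1 s1 q0 φ0 = 0 :=
  stmt14_general r s0 s1 T φ0 m0 m1 ρ0 ρ1 hs0 hs1 hT hm0 hρ0 hm1 hρ1 hcase1 hcase2
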